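/- arXiv:1111.7022 — 2 statements merged into one kernel-verified Lean document; each statement's English description precedes it below -/
import Mathlib

section
/- Let X be a metric space, and let {Z_α}_{α∈A} and {Y_β}_{β∈B} be families of subspaces of X. Suppose {Z_α}_{α∈A} ∈ 𝔇_γ for some ordinal γ, and suppose there exists t > 0 (independent of β) such that for every β ∈ B there is α ∈ A with Y_β ⊂ N_t(Z_α). Then {Y_β}_{β∈B} ∈ 𝔇_γ as well. -/
open scoped ENNReal

universe u

namespace Paper

/-- A metric family: a (indexed) set of metric spaces. -/
structure MetricFamily : Type (u + 1) where
  ι : Type u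
  carrier : ι → Type u
  [inst : ∀ i, EMetricSpace (carrier i)]

attribute [instance] MetricFamily.inst

/-- The distance between two subsets of a metric space. -/
noncomputable def eSetDist {X : Type u} [EMetricSpace X] (P Q : Set X) : ℝ≥0∞ :=
  ⨅ p ∈ P, EMetric.infEdist p Q

/-- The open `r`-neighborhood of a subset of a metric space. -/
def ENbhd {X : Type u} [EMetricSpace X] (r : ℝ≥0∞) (Z : Set X) : Set X :=
  {y | EMetric.infEdist y Z < r}

/-- A uniformly bounded metric family: there is a common (finite) bound for the diameters
of all of its members. -/
def UniformlyBounded : Set MetricFamily.{u} :=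
  {F | ∃ R : ℝ≥0∞, R ≠ ⊤ ∧ ∀ i : F.ι, EMetric.diam (Set.univ : Set (F.carrier i)) < R}

/-- A metric family `F` decomposes over a class `D` of metric families: for every `r > 0`,
every member decomposes as a union `U ∪ V`, where `U` and `V` admit `r`-disjoint
decompositions into pieces which form metric families belonging to `D`. -/
def Decomposes (F : MetricFamily.{u}) (D : Set MetricFamily.{u}) : Prop :=
  ∀ r : ℝ, 0 < r →
    ∃ (U V : ∀ α : F.ι, Set (F.carrier α))
      (I J : F.ι → Type u)
      (Us : ∀ α, I α → Set (F.carrier α)) (Vs : ∀ α, J α → Set (F.carrier α)),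
      (∀ α, U α ∪ V α = Set.univ) ∧
      (∀ α, (⋃ i, Us α i) = U α) ∧ (∀ α, (⋃ j, Vs α j) = V α) ∧
      (∀ α (i i' : I α), i ≠ i' → ENNReal.ofReal r < eSetDist (Us α i) (Us α i')) ∧
      (∀ α (j j' : J α), j ≠ j' → ENNReal.ofReal r < eSetDist (Vs α j) (Vs α j')) ∧
      (MetricFamily.mk ((α : F.ι) × I α) (fun p => ↥(Us p.1 p.2)) ∈ D) ∧
      (MetricFamily.mk ((α : F.ι) × J α) (fun p => ↥(Vs p.1 p.2)) ∈ D)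

/-- The decomposition complexity classes `𝔇_γ`, defined by transfinite recursion:
`𝔇₀ = 𝔅` is the class of uniformly bounded families, `𝔇_{γ+1}` is the class of families
decomposing over `𝔇_γ`, and `𝔇_γ = ⋃_{β<γ} 𝔇_β` at limit ordinals. -/
noncomputable def Dclass : Ordinal.{u} → Set MetricFamily.{u} := fun γ =>
  Ordinal.limitRecOn γ UniformlyBounded
    (fun _ D => {F | Decomposes F D})
    (fun o _ ih => {F | ∃ (o' : Ordinal.{u}) (h : o' < o), F ∈ ih o' h})

/-- The metric family associated to a family of subspaces of the metric space `X`. -/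
def famOf (X : Type u) [EMetricSpace X] {ι : Type u} (Z : ι → Set X) :
    MetricFamily.{u} :=
  MetricFamily.mk ι (fun i => ↥(Z i))

end Paper


open Paper EMetric

lemma Paper.Dclass_zero : Dclass (0 : Ordinal.{u}) = UniformlyBounded :=
  Ordinal.limitRecOn_zero _ _ _

lemma Paper.Dclass_succ (γ : Ordinal.{u}) :
    Dclass (Order.succ γ) = {F | Decomposes F (Dclass γ)} :=
  Ordinal.limitRecOn_succ _ _ _ _

lemma Paper.Dclass_limit (γ : Ordinal.{u}) (h : Order.IsSuccLimit γ) :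
    Dclass γ = {F | ∃ (o' : Ordinal.{u}) (_ : o' < γ), F ∈ Dclass o'} :=
  Ordinal.limitRecOn_limit _ _ _ _ h

lemma Paper.eSetDist_le_edist {X : Type u} [EMetricSpace X] {P Q : Set X} {p q : X}
    (hp : p ∈ P) (hq : q ∈ Q) : eSetDist P Q ≤ edist p q :=
  le_trans (iInf₂_le p hp) (infEdist_le_edist_of_mem hq)

lemma Paper.le_eSetDist {X : Type u} [EMetricSpace X] {P Q : Set X} {b : ℝ≥0∞}
    (h : ∀ p ∈ P, ∀ q ∈ Q, b ≤ edist p q) : b ≤ eSetDist P Q :=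
  le_iInf₂ fun p hp => le_infEdist.2 fun q hq => h p hp q hq

/-- Key lemma: if `G` maps into `F` with additive distance error at most `c < ∞`
(in both directions), then membership of `F` in `𝔇_γ` implies that of `G`. -/
lemma Paper.key (γ : Ordinal.{u}) :
    ∀ (F G : MetricFamily.{u}) (c : ℝ≥0∞), c ≠ ⊤ →
    ∀ (a : G.ι → F.ι) (f : ∀ β, G.carrier β → F.carrier (a β)),
    (∀ β x y, edist (f β x) (f β y) ≤ edist x y + c) →
    (∀ β x y, edist x y ≤ edist (f β x) (f β y) + c) →
    F ∈ Dclass γ → G ∈ Dclass γ := by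
  induction γ using Ordinal.induction with
  | _ γ IH =>
  intro F G c hc a f hf1 hf2 hF
  rcases Ordinal.zero_or_succ_or_isSuccLimit γ with hz | ⟨δ, rfl⟩ | hl
  · subst hz
    rw [Paper.Dclass_zero] at hF ⊢
    obtain ⟨R, hR, hbd⟩ := hF
    refine ⟨R + c, ENNReal.add_ne_top.2 ⟨hR, hc⟩, fun β => ?_⟩
    refine lt_of_le_of_lt (EMetric.diam_le fun x _ y _ => ?_)
      (ENNReal.add_lt_add_right hc (hbd (a β)))
    exact (hf2 β x y).trans (add_le_add_left
      (edist_le_diam_of_mem (Set.mem_univ _) (Set.mem_univ _)) c)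
  · rw [Paper.Dclass_succ] at hF ⊢
    intro r hr
    obtain ⟨U, V, I, J, Us, Vs, hUV, hU, hV, hdU, hdV, hmU, hmV⟩ :=
      hF (r + c.toReal) (add_pos_of_pos_of_nonneg hr ENNReal.toReal_nonneg)
    have hofr : ENNReal.ofReal (r + c.toReal) = ENNReal.ofReal r + c := by
      rw [ENNReal.ofReal_add hr.le ENNReal.toReal_nonneg, ENNReal.ofReal_toReal hc]
    have disj : ∀ (β : G.ι) (P Q : Set (F.carrier (a β))),
        ENNReal.ofReal (r + c.toReal) < eSetDist P Q →
        ENNReal.ofReal r < eSetDist ((f β) ⁻¹' P) ((f β) ⁻¹' Q) := by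
      intro β P Q hPQ
      refine lt_of_lt_of_le (b := eSetDist P Q - c) ?_
        (Paper.le_eSetDist fun x hx x' hx' => ?_)
      · -- ofReal r < eSetDist P Q - c
        by_contra hcon
        push_neg at hcon
        have h2 : eSetDist P Q ≤ ENNReal.ofReal r + c := tsub_le_iff_right.1 hcon
        rw [hofr] at hPQ
        exact absurd (hPQ.trans_le h2) (lt_irrefl _)
      · exact tsub_le_iff_right.2
          ((Paper.eSetDist_le_edist (P := P) (Q := Q) hx hx').trans (hf1 β x x'))
    refine ⟨fun β => f β ⁻¹' U (a β), fun β => f β ⁻¹' V (a β),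
      fun β => I (a β), fun β => J (a β),
      fun β i => f β ⁻¹' Us (a β) i, fun β j => f β ⁻¹' Vs (a β) j,
      ?_, ?_, ?_, ?_, ?_, ?_, ?_⟩
    · intro β; rw [← Set.preimage_union, hUV, Set.preimage_univ]
    · intro β; rw [← Set.preimage_iUnion, hU]
    · intro β; rw [← Set.preimage_iUnion, hV]
    · intro β i i' hne
      exact disj β _ _ (hdU (a β) i i' hne)
    · intro β j j' hne
      exact disj β _ _ (hdV (a β) j j' hne)
    · refine IH δ (Order.lt_succ δ)
        (MetricFamily.mk ((α : F.ι) × I α) fun p => ↥(Us p.1 p.2))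
        (MetricFamily.mk ((β : G.ι) × I (a β)) fun p => ↥(f p.1 ⁻¹' Us (a p.1) p.2))
        c hc
        (fun p => (⟨a p.1, p.2⟩ : (α : F.ι) × I α))
        (fun p x => ⟨f p.1 x.1, x.2⟩) ?_ ?_ hmU
      · intro p x y
        simpa only [Subtype.edist_eq] using hf1 p.1 x.1 y.1
      · intro p x y
        simpa only [Subtype.edist_eq] using hf2 p.1 x.1 y.1
    · refine IH δ (Order.lt_succ δ)
        (MetricFamily.mk ((α : F.ι) × J α) fun p => ↥(Vs p.1 p.2))
        (MetricFamily.mk ((β : G.ι) × J (a β)) fun p => ↥(f p.1 ⁻¹' Vs (a p.1) p.2))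
        c hc
        (fun p => (⟨a p.1, p.2⟩ : (α : F.ι) × J α))
        (fun p x => ⟨f p.1 x.1, x.2⟩) ?_ ?_ hmV
      · intro p x y
        simpa only [Subtype.edist_eq] using hf1 p.1 x.1 y.1
      · intro p x y
        simpa only [Subtype.edist_eq] using hf2 p.1 x.1 y.1
  · rw [Paper.Dclass_limit γ hl] at hF ⊢
    obtain ⟨o', ho', hFo⟩ := hF
    exact ⟨o', ho', IH o' ho' _ _ c hc a f hf1 hf2 hFo⟩


/-- **Statement 10.** -/
theorem statement10 {X : Type u} [EMetricSpace X] {ιA ιB : Type u}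
    (Z : ιA → Set X) (Y : ιB → Set X) (γ : Ordinal.{u})
    (hZ : famOf X Z ∈ Dclass γ)
    (t : ℝ) (ht : 0 < t)
    (h : ∀ β : ιB, ∃ α : ιA, Y β ⊆ ENbhd (ENNReal.ofReal t) (Z α)) :
    famOf X Y ∈ Dclass γ := by
  classical
  choose a ha using h
  have hmem : ∀ (β : ιB) (y : ↥(Y β)),
      ∃ z ∈ Z (a β), edist (y : X) z < ENNReal.ofReal t := by
    intro β y
    exact EMetric.infEdist_lt_iff.1 (ha β y.2)
  choose g hg1 hg2 using hmem
  set c : ℝ≥0∞ := ENNReal.ofReal t + ENNReal.ofReal t with hc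
  have cond1 : ∀ (β : ιB) (x y : ↥(Y β)),
      edist (⟨g β x, hg1 β x⟩ : ↥(Z (a β))) ⟨g β y, hg1 β y⟩ ≤ edist x y + c := by
    intro β x y
    simp only [Subtype.edist_eq]
    calc edist (g β x) (g β y)
        ≤ edist (g β x) (x : X) + edist (x : X) (y : X) + edist (y : X) (g β y) :=
          edist_triangle4 _ _ _ _
      _ ≤ ENNReal.ofReal t + edist (x : X) (y : X) + ENNReal.ofReal t := by
          gcongr
          · rw [edist_comm]; exact (hg2 β x).le
          · exact (hg2 β y).le
      _ = edist (x : X) (y : X) + c := by rw [hc]; ring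
  have cond2 : ∀ (β : ιB) (x y : ↥(Y β)),
      edist x y ≤ edist (⟨g β x, hg1 β x⟩ : ↥(Z (a β))) ⟨g β y, hg1 β y⟩ + c := by
    intro β x y
    simp only [Subtype.edist_eq]
    calc edist (x : X) (y : X)
        ≤ edist (x : X) (g β x) + edist (g β x) (g β y) + edist (g β y) (y : X) :=
          edist_triangle4 _ _ _ _
      _ ≤ ENNReal.ofReal t + edist (g β x) (g β y) + ENNReal.ofReal t := by
          gcongr
          · exact (hg2 β x).le
          · rw [edist_comm]; exact (hg2 β y).le
      _ = edist (g β x) (g β y) + c := by rw [hc]; ring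
  exact Paper.key γ (famOf X Z) (famOf X Y) c
    (ENNReal.add_ne_top.2 ⟨ENNReal.ofReal_ne_top, ENNReal.ofReal_ne_top⟩)
    a (fun β y => ⟨g β y, hg1 β y⟩) cond1 cond2 hZ
end

section
/- Let X be a metric space and let 𝒵 = (Z¹, Z², …) be a decomposed sequence in X lying in 𝔇_γ(X) for some ordinal γ. If 𝒴 is another decomposed sequence in X, with the same indexing sets as 𝒵, such that 𝒴 ⊂ N_𝐓(𝒵) for some sequence 𝐓 = (T₁, T₂, …) of positive real numbers (i.e. Y^r_α ⊂ N_{T_r}(Z^r_α) for all r ≥ 1 and α ∈ A_r), then 𝒴 ∈ 𝔇_γ(X) as well. -/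
open scoped ENNReal

universe u

namespace Paper

lemma sep_aux {A B : Type u} [EMetricSpace A] [EMetricSpace B]
    (t : ℝ) (ht : 0 ≤ t) (r : ℝ) (hr : 0 < r) {g : A → B} {P Q : Set B}
    (hPQ : ENNReal.ofReal (r + 1 + t) < eSetDist P Q)
    (hg : ∀ y y' : A, edist (g y) (g y') ≤ edist y y' + ENNReal.ofReal t) :
    ENNReal.ofReal r < eSetDist (g ⁻¹' P) (g ⁻¹' Q) := by
  have h1 : ENNReal.ofReal r < ENNReal.ofReal (r + 1) :=
    (ENNReal.ofReal_lt_ofReal_iff (by linarith)).2 (by linarith)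
  refine lt_of_lt_of_le h1 ?_
  rw [eSetDist]
  refine le_iInf₂ fun p hp => ?_
  rw [EMetric.infEdist, Metric.le_infEDist]
  intro q hq
  have h2 : eSetDist P Q ≤ edist (g p) (g q) := by
    rw [eSetDist]
    exact le_trans (iInf₂_le (g p) hp) (EMetric.infEdist_le_edist_of_mem hq)
  have h3 : ENNReal.ofReal (r + 1) + ENNReal.ofReal t < edist p q + ENNReal.ofReal t := by
    rw [← ENNReal.ofReal_add (by linarith) ht]
    exact lt_of_lt_of_le (lt_of_lt_of_le hPQ h2) (hg p q)
  exact le_of_lt ((ENNReal.add_lt_add_iff_right ENNReal.ofReal_ne_top).1 h3)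

end Paper

namespace Paper

lemma Dclass_zero_s1 : Dclass.{u} 0 = UniformlyBounded := by
  rw [Dclass, Ordinal.limitRecOn_zero]

lemma Dclass_succ_s1 (β : Ordinal.{u}) :
    Dclass.{u} (Order.succ β) = {F | Decomposes F (Dclass β)} := by
  rw [Dclass, Ordinal.limitRecOn_succ]
  rfl

lemma Dclass_limit_s1 {γ : Ordinal.{u}} (hγ : Order.IsSuccLimit γ) :
    Dclass.{u} γ = {F | ∃ (β : Ordinal.{u}) (_ : β < γ), F ∈ Dclass β} := by
  rw [Dclass, Ordinal.limitRecOn_limit _ _ _ _ hγ]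
  rfl

/-- Key lemma: membership in `Dclass γ` is inherited along families of maps that
distort distances by at most an additive constant `t`. -/
lemma key_s1 (t : ℝ) (ht : 0 ≤ t) :
    ∀ γ : Ordinal.{u}, ∀ F : MetricFamily.{u}, F ∈ Dclass γ →
      ∀ (G : MetricFamily.{u}) (e : G.ι → F.ι)
        (g : ∀ j, G.carrier j → F.carrier (e j)),
        (∀ j (y y' : G.carrier j),
            edist (g j y) (g j y') ≤ edist y y' + ENNReal.ofReal t ∧
            edist y y' ≤ edist (g j y) (g j y') + ENNReal.ofReal t) →
        G ∈ Dclass γ := by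
  intro γ
  induction γ using Ordinal.induction with
  | h γ IH =>
    intro F hF G e g hg
    rcases Ordinal.zero_or_succ_or_isSuccLimit γ with h0 | ⟨β, rfl⟩ | hlim
    · subst h0
      rw [Dclass_zero_s1] at hF ⊢
      obtain ⟨R, hRtop, hR⟩ := hF
      refine ⟨R + ENNReal.ofReal t, by simp [hRtop, ENNReal.add_ne_top], fun j => ?_⟩
      have hle : EMetric.diam (Set.univ : Set (G.carrier j)) ≤
          EMetric.diam (Set.univ : Set (F.carrier (e j))) + ENNReal.ofReal t := by
        refine EMetric.diam_le fun y _ y' _ => ?_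
        calc edist y y' ≤ edist (g j y) (g j y') + ENNReal.ofReal t := (hg j y y').2
          _ ≤ EMetric.diam (Set.univ : Set (F.carrier (e j))) + ENNReal.ofReal t := by
              gcongr
              exact EMetric.edist_le_diam_of_mem (Set.mem_univ _) (Set.mem_univ _)
      calc EMetric.diam (Set.univ : Set (G.carrier j))
          ≤ EMetric.diam (Set.univ : Set (F.carrier (e j))) + ENNReal.ofReal t := hle
        _ < R + ENNReal.ofReal t := by
            exact ENNReal.add_lt_add_right ENNReal.ofReal_ne_top (hR (e j))
    · rw [Dclass_succ_s1] at hF ⊢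
      intro r hr
      obtain ⟨U, V, I, J, Us, Vs, hUV, hU, hV, hUs, hVs, hUmem, hVmem⟩ :=
        hF (r + 1 + t) (by linarith)
      refine ⟨fun j => g j ⁻¹' U (e j), fun j => g j ⁻¹' V (e j),
        fun j => I (e j), fun j => J (e j),
        fun j i => g j ⁻¹' Us (e j) i, fun j i' => g j ⁻¹' Vs (e j) i',
        fun j => by rw [← Set.preimage_union, hUV, Set.preimage_univ],
        fun j => by rw [← Set.preimage_iUnion, hU],
        fun j => by rw [← Set.preimage_iUnion, hV], ?_, ?_, ?_, ?_⟩
      · intro j i i' hne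
        exact sep_aux t ht r hr (hUs (e j) i i' hne) (fun y y' => (hg j y y').1)
      · intro j i i' hne
        exact sep_aux t ht r hr (hVs (e j) i i' hne) (fun y y' => (hg j y y').1)
      · refine IH β (Order.lt_succ β) _ hUmem _
          (fun p => (⟨e p.1, p.2⟩ : (α : F.ι) × I α))
          (fun p y => ⟨g p.1 y.1, y.2⟩) ?_
        intro p y y'
        simpa only [Subtype.edist_eq] using hg p.1 y.1 y'.1
      · refine IH β (Order.lt_succ β) _ hVmem _
          (fun p => (⟨e p.1, p.2⟩ : (α : F.ι) × J α))
          (fun p y => ⟨g p.1 y.1, y.2⟩) ?_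
        intro p y y'
        simpa only [Subtype.edist_eq] using hg p.1 y.1 y'.1
    · rw [Dclass_limit_s1 hlim] at hF ⊢
      obtain ⟨β, hβ, hF⟩ := hF
      exact ⟨β, hβ, IH β hβ F hF G e g hg⟩

end Paper

open Paper

/-- **Statement 11.** A decomposed sequence in `X` is a sequence of subspaces
`Z¹, Z², …` of `X` together with decompositions `Z^r = ⋃_{α ∈ A_r} Z^r_α`; it lies in
`𝔇_γ(X)` when each of the families `{Z^r_α}_{α ∈ A_r}` lies in `𝔇_γ`. If `𝒴` is another
decomposed sequence with the same indexing sets and `Y^r_α ⊆ N_{T_r}(Z^r_α)` for a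
sequence `T` of positive reals, then `𝒴 ∈ 𝔇_γ(X)` as well. -/
theorem statement11 {X : Type u} [EMetricSpace X] {Ar : ℕ → Type u}
    (Zseq Yseq : ℕ → Set X) (Zp Yp : ∀ r : ℕ, Ar r → Set X)
    -- `𝒵` and `𝒴` are decomposed sequences in `X`:
    (hZdec : ∀ r : ℕ, 1 ≤ r → Zseq r = ⋃ α : Ar r, Zp r α)
    (hYdec : ∀ r : ℕ, 1 ≤ r → Yseq r = ⋃ α : Ar r, Yp r α)
    (γ : Ordinal.{u})
    -- `𝒵 ∈ 𝔇_γ(X)`: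
    (hZ : ∀ r : ℕ, 1 ≤ r → famOf X (Zp r) ∈ Dclass γ)
    -- `𝒴 ⊆ N_𝐓(𝒵)` for a sequence `𝐓` of positive reals:
    (T : ℕ → ℝ) (hT : ∀ r, 0 < T r)
    (hsub : ∀ (r : ℕ), 1 ≤ r → ∀ α : Ar r, Yp r α ⊆ ENbhd (ENNReal.ofReal (T r)) (Zp r α)) :
    ∀ r : ℕ, 1 ≤ r → famOf X (Yp r) ∈ Dclass γ := by
  intro r hr
  have hchoice : ∀ (α : Ar r) (y : ↥(Yp r α)),
      ∃ z : ↥(Zp r α), edist (y : X) (z : X) < ENNReal.ofReal (T r) := by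
    intro α y
    have h := hsub r hr α y.2
    rw [ENbhd, Set.mem_setOf_eq, EMetric.infEdist, Metric.infEDist_lt_iff] at h
    obtain ⟨z, hz, hd⟩ := h
    exact ⟨⟨z, hz⟩, hd⟩
  choose g hgd using hchoice
  refine key_s1 (2 * T r) (by have := (hT r).le; linarith) γ (famOf X (Zp r)) (hZ r hr)
    (famOf X (Yp r)) id g ?_
  show ∀ (α : Ar r) (y y' : ↥(Yp r α)),
      edist (g α y : X) (g α y' : X) ≤ edist (y : X) (y' : X) + ENNReal.ofReal (2 * T r) ∧
      edist (y : X) (y' : X) ≤ edist (g α y : X) (g α y' : X) + ENNReal.ofReal (2 * T r)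
  intro α y y'
  have hTT : ENNReal.ofReal (T r) + ENNReal.ofReal (T r) = ENNReal.ofReal (2 * T r) := by
    rw [← ENNReal.ofReal_add (hT r).le (hT r).le]; ring_nf
  constructor
  · calc edist (g α y : X) (g α y' : X)
        ≤ edist (g α y : X) (y : X) + edist (y : X) (y' : X) + edist (y' : X) (g α y' : X) :=
          edist_triangle4 _ _ _ _
      _ ≤ ENNReal.ofReal (T r) + edist (y : X) (y' : X) + ENNReal.ofReal (T r) := by
          gcongr
          · rw [edist_comm]; exact (hgd α y).le
          · exact (hgd α y').le
      _ = edist (y : X) (y' : X) + (ENNReal.ofReal (T r) + ENNReal.ofReal (T r)) := by ring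
      _ = edist (y : X) (y' : X) + ENNReal.ofReal (2 * T r) := by rw [hTT]
  · calc edist (y : X) (y' : X)
        ≤ edist (y : X) (g α y : X) + edist (g α y : X) (g α y' : X)
            + edist (g α y' : X) (y' : X) := edist_triangle4 _ _ _ _
      _ ≤ ENNReal.ofReal (T r) + edist (g α y : X) (g α y' : X) + ENNReal.ofReal (T r) := by
          gcongr
          · exact (hgd α y).le
          · rw [edist_comm]; exact (hgd α y').le
      _ = edist (g α y : X) (g α y' : X) + (ENNReal.ofReal (T r) + ENNReal.ofReal (T r)) := by
          ring
      _ = edist (g α y : X) (g α y' : X) + ENNReal.ofReal (2 * T r) := by rw [hTT]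
end
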